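/- arXiv:2412.06068 — 3 statements merged into one kernel-verified Lean document; each statement's English description precedes it below -/
import Mathlib

section
/- If G is a maximal planar graph on n ≥ 47 vertices, then G has a vertex whose degree is at least 4 and strictly less than n/2. -/
attribute [local instance] Classical.propDecidable

open SimpleGraph

/-- Subdividing the edge `uv` of `H`: remove `uv`, add a new vertex joined to `u` and `v`. -/
def SubdivideEdge {W : Type} (H : SimpleGraph W) (u v : W) : SimpleGraph (W ⊕ Unit) :=
  SimpleGraph.fromRel (fun a b =>
    (∃ x y : W, a = Sum.inl x ∧ b = Sum.inl y ∧ H.Adj x y ∧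
      ¬(x = u ∧ y = v) ∧ ¬(x = v ∧ y = u)) ∨
    (a = Sum.inl u ∧ b = Sum.inr ()) ∨ (a = Sum.inl v ∧ b = Sum.inr ()))

/-- `Subdivision G H` : `H` is obtained from `G` by repeatedly subdividing edges. -/
inductive Subdivision {V : Type} (G : SimpleGraph V) : ∀ {W : Type}, SimpleGraph W → Prop
  | base : Subdivision G G
  | step {W : Type} {H : SimpleGraph W} {u v : W} :
      Subdivision G H → H.Adj u v → Subdivision G (SubdivideEdge H u v)

/-- `G` contains a subdivision of `K` as a subgraph. -/
def ContainsSubdivision {V V₀ : Type} (G : SimpleGraph V) (K : SimpleGraph V₀) : Prop :=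
  ∃ (W : Type) (H : SimpleGraph W), Subdivision K H ∧
    ∃ f : W ↪ V, ∀ a b : W, H.Adj a b → G.Adj (f a) (f b)

/-- Planarity, via Kuratowski's characterization: no subdivision of `K₅` or `K₃,₃`. -/
def SimpleGraph.Planar {V : Type} (G : SimpleGraph V) : Prop :=
  ¬ ContainsSubdivision G (completeGraph (Fin 5)) ∧
  ¬ ContainsSubdivision G (completeBipartiteGraph (Fin 3) (Fin 3))

/-- A maximal planar graph: a simple planar graph on `n ≥ 3` vertices with `3n - 6` edges. -/
def MaximalPlanar {V : Type} [Fintype V] (G : SimpleGraph V) : Prop :=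
  G.Planar ∧ 3 ≤ Fintype.card V ∧ G.edgeSet.ncard = 3 * Fintype.card V - 6


lemma k33_lemma {V : Type} (G : SimpleGraph V) (a b c x y z : V)
    (hab : a ≠ b) (hac : a ≠ c) (hbc : b ≠ c)
    (hxy : x ≠ y) (hxz : x ≠ z) (hyz : y ≠ z)
    (h1 : G.Adj a x) (h2 : G.Adj a y) (h3 : G.Adj a z)
    (h4 : G.Adj b x) (h5 : G.Adj b y) (h6 : G.Adj b z)
    (h7 : G.Adj c x) (h8 : G.Adj c y) (h9 : G.Adj c z) :
    ContainsSubdivision G (completeBipartiteGraph (Fin 3) (Fin 3)) := by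
  have n1 := h1.ne; have n2 := h2.ne; have n3 := h3.ne
  have n4 := h4.ne; have n5 := h5.ne; have n6 := h6.ne
  have n7 := h7.ne; have n8 := h8.ne; have n9 := h9.ne
  refine ⟨Fin 3 ⊕ Fin 3, completeBipartiteGraph (Fin 3) (Fin 3), Subdivision.base,
    ⟨Sum.elim ![a,b,c] ![x,y,z], ?_⟩, ?_⟩
  · intro u v huv
    rcases u with i | i <;> rcases v with j | j <;>
      fin_cases i <;> fin_cases j <;> simp_all
  · intro u v huv
    change G.Adj (Sum.elim ![a,b,c] ![x,y,z] u) (Sum.elim ![a,b,c] ![x,y,z] v)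
    rcases u with i | i <;> rcases v with j | j <;>
      fin_cases i <;> fin_cases j <;>
      simp_all [completeBipartiteGraph, adj_comm]

lemma choose3_ge : ∀ m : ℕ, 4 * m ≤ m.choose 3 + 12 := by
  have H : ∀ m, 7 ≤ m → 4 * m ≤ m.choose 3 + 12 := by
    intro m hm
    induction m, hm using Nat.le_induction with
    | base => decide
    | succ p hp ih =>
      have h2 : 21 ≤ p.choose 2 :=
        le_trans (by decide : 21 ≤ Nat.choose 7 2) (Nat.choose_le_choose 2 hp)
      have h3 : (p+1).choose 3 = p.choose 2 + p.choose 3 := Nat.choose_succ_succ p 2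
      omega
  intro m
  rcases le_or_gt 7 m with hm | hm
  · exact H m hm
  · interval_cases m <;> decide

lemma choose3_ge2 : ∀ m : ℕ, m ≤ 3 → m ≤ m.choose 3 + 2 := by
  intro m hm; interval_cases m <;> decide


/-- A maximal planar graph on `n ≥ 47` vertices has a vertex of degree at least `4`
and strictly less than `n/2`. -/
theorem stmt2 {V : Type} [Fintype V] (G : SimpleGraph V)
    (hn : 47 ≤ Fintype.card V) (hG : MaximalPlanar G) :
    ∃ v : V, 4 ≤ G.degree v ∧ 2 * G.degree v < Fintype.card V := by
  classical
  by_contra hcon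
  push_neg at hcon
  set n := Fintype.card V with hndef
  set H : Finset V := Finset.univ.filter (fun v => n ≤ 2 * G.degree v) with hHdef
  have hlow : ∀ v : V, v ∉ H → G.degree v ≤ 3 := by
    intro v hv
    rw [hHdef, Finset.mem_filter] at hv
    by_contra hd
    exact hv ⟨Finset.mem_univ v, hcon v (by omega)⟩
  have hkn : H.card ≤ n := Finset.card_le_univ H
  -- total degree sum
  have hsum : (∑ a ∈ H, G.degree a) + (∑ v ∈ Hᶜ, G.degree v) = 2 * (3 * n - 6) := by
    rw [Finset.sum_add_sum_compl, SimpleGraph.sum_degrees_eq_twice_card_edges]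
    congr 1
    rw [← hG.2.2, Set.ncard_eq_toFinset_card']
    congr 1
  have hcardc : (Hᶜ : Finset V).card = n - H.card := by
    rw [Finset.card_compl]
  -- low degree sum bound
  have hSL : (∑ v ∈ Hᶜ, G.degree v) ≤ (n - H.card) * 3 := by
    rw [← hcardc]
    refine le_trans (Finset.sum_le_card_nsmul _ _ 3 ?_) (by simp [mul_comm])
    intro v hv
    exact hlow v (Finset.mem_compl.1 hv)
  -- h v := card (N v ∩ H)
  have hpt : ∀ v : V, (G.neighborFinset v ∩ H).card ≤ G.degree v := by
    intro v
    exact Finset.card_le_card Finset.inter_subset_left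
  have hswap : (∑ v : V, (G.neighborFinset v ∩ H).card) = ∑ a ∈ H, G.degree a := by
    have e1 : ∀ v : V, (G.neighborFinset v ∩ H).card
        = ∑ a ∈ H, if G.Adj v a then 1 else 0 := by
      intro v
      rw [← Finset.card_filter]
      congr 1
      ext a
      simp [Finset.mem_inter, SimpleGraph.mem_neighborFinset, and_comm]
    simp only [e1]
    rw [Finset.sum_comm]
    refine Finset.sum_congr rfl fun a _ => ?_
    rw [← Finset.card_filter]
    congr 1
    ext v
    simp [SimpleGraph.mem_neighborFinset, SimpleGraph.adj_comm]
  have hsplit : (∑ a ∈ H, (G.neighborFinset a ∩ H).card)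
      + (∑ v ∈ Hᶜ, (G.neighborFinset v ∩ H).card) = ∑ a ∈ H, G.degree a := by
    rw [Finset.sum_add_sum_compl, hswap]
  have hF3 : (∑ v ∈ Hᶜ, (G.neighborFinset v ∩ H).card) ≤ ∑ v ∈ Hᶜ, G.degree v :=
    Finset.sum_le_sum fun v _ => hpt v
  have hF5 : H.card * n ≤ 2 * (∑ a ∈ H, G.degree a) := by
    rw [Finset.mul_sum]
    refine le_trans (le_of_eq ?_) (Finset.sum_le_sum fun a ha => (Finset.mem_filter.1 ha).2)
    simp [Finset.sum_const, mul_comm]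
  -- each high vertex has < k high neighbours
  have hF6 : (∑ a ∈ H, (G.neighborFinset a ∩ H).card) + H.card ≤ H.card * H.card := by
    have hpt6 : ∀ a ∈ H, (G.neighborFinset a ∩ H).card + 1 ≤ H.card := by
      intro a ha
      have hsub : G.neighborFinset a ∩ H ⊆ H.erase a := by
        intro w hw
        rw [Finset.mem_inter] at hw
        refine Finset.mem_erase.2 ⟨?_, hw.2⟩
        intro hwa
        subst hwa
        exact G.irrefl ((SimpleGraph.mem_neighborFinset _ _ _).1 hw.1)
      have := Finset.card_le_card hsub
      rw [Finset.card_erase_of_mem ha] at this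
      have hk1 : 1 ≤ H.card := Finset.card_pos.2 ⟨a, ha⟩
      omega
    calc (∑ a ∈ H, (G.neighborFinset a ∩ H).card) + H.card
        = ∑ a ∈ H, ((G.neighborFinset a ∩ H).card + 1) := by
          rw [Finset.sum_add_distrib, Finset.sum_const, smul_eq_mul, mul_one]
      _ ≤ ∑ _a ∈ H, H.card := Finset.sum_le_sum hpt6
      _ = H.card * H.card := by rw [Finset.sum_const, smul_eq_mul]
  have hne : Nonempty V := Fintype.card_pos_iff.1 (by omega)
  have hF7 : (∑ a ∈ H, G.degree a) ≤ H.card * (n - 1) := by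
    refine le_trans (Finset.sum_le_card_nsmul _ _ (n-1) ?_) (by simp [mul_comm])
    intro a _
    have := G.degree_lt_card_verts a
    omega
  -- the triple-counting identity
  have hIdent : (∑ v : V, ((G.neighborFinset v ∩ H).card.choose 3))
      = ∑ T ∈ H.powersetCard 3,
          (Finset.univ.filter (fun v => T ⊆ G.neighborFinset v)).card := by
    have e1 : ∀ v : V, ((G.neighborFinset v ∩ H).card.choose 3)
        = ∑ T ∈ H.powersetCard 3, if T ⊆ G.neighborFinset v then 1 else 0 := by
      intro v
      rw [← Finset.card_filter, ← Finset.card_powersetCard]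
      congr 1
      ext T
      simp only [Finset.mem_powersetCard, Finset.mem_filter, Finset.subset_inter_iff]
      tauto
    simp only [e1]
    rw [Finset.sum_comm]
    exact Finset.sum_congr rfl fun T _ => (Finset.card_filter _ _).symm
  -- no triple of H has 3 common neighbours (else K₃,₃)
  have hT3 : ∀ T ∈ H.powersetCard 3,
      (Finset.univ.filter (fun v => T ⊆ G.neighborFinset v)).card ≤ 2 := by
    intro T hTmem
    by_contra hTc
    push_neg at hTc
    obtain ⟨_, hT3'⟩ := Finset.mem_powersetCard.1 hTmem
    obtain ⟨t, hts, htc⟩ := Finset.exists_subset_card_eq hTc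
    obtain ⟨a, b, c, hab, hac, hbc, hTabc⟩ := Finset.card_eq_three.1 hT3'
    obtain ⟨x, y, z, hxy, hxz, hyz, htxyz⟩ := Finset.card_eq_three.1 htc
    have hmem : ∀ w ∈ t, ∀ u ∈ T, G.Adj u w := by
      intro w hw u hu
      have := (Finset.mem_filter.1 (hts hw)).2
      exact ((SimpleGraph.mem_neighborFinset _ _ _).1 (this hu)).symm
    subst hTabc htxyz
    have ma : a ∈ ({a,b,c} : Finset V) := by simp
    have mb : b ∈ ({a,b,c} : Finset V) := by simp
    have mc : c ∈ ({a,b,c} : Finset V) := by simp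
    have mx : x ∈ ({x,y,z} : Finset V) := by simp
    have my : y ∈ ({x,y,z} : Finset V) := by simp
    have mz : z ∈ ({x,y,z} : Finset V) := by simp
    exact hG.1.2 (k33_lemma G a b c x y z hab hac hbc hxy hxz hyz
      (hmem x mx a ma) (hmem y my a ma) (hmem z mz a ma)
      (hmem x mx b mb) (hmem y my b mb) (hmem z mz b mb)
      (hmem x mx c mc) (hmem y my c mc) (hmem z mz c mc))
  have hF8 : (∑ a ∈ H, ((G.neighborFinset a ∩ H).card.choose 3))
      + (∑ v ∈ Hᶜ, ((G.neighborFinset v ∩ H).card.choose 3))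
      ≤ 2 * (H.card.choose 3) := by
    rw [Finset.sum_add_sum_compl, hIdent, ← Finset.card_powersetCard 3 H]
    refine le_trans (Finset.sum_le_card_nsmul _ _ 2 hT3) (by simp [mul_comm])
  have hF9 : (∑ v ∈ Hᶜ, (G.neighborFinset v ∩ H).card)
      ≤ (∑ v ∈ Hᶜ, ((G.neighborFinset v ∩ H).card.choose 3)) + (n - H.card) * 2 := by
    rw [← hcardc]
    have : (∑ v ∈ Hᶜ, (G.neighborFinset v ∩ H).card)
        ≤ ∑ v ∈ Hᶜ, (((G.neighborFinset v ∩ H).card.choose 3) + 2) := by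
      refine Finset.sum_le_sum fun v hv => ?_
      exact choose3_ge2 _ (le_trans (hpt v) (hlow v (Finset.mem_compl.1 hv)))
    rw [Finset.sum_add_distrib, Finset.sum_const, smul_eq_mul] at this
    omega
  have hF10 : 4 * (∑ a ∈ H, (G.neighborFinset a ∩ H).card)
      ≤ (∑ a ∈ H, ((G.neighborFinset a ∩ H).card.choose 3)) + H.card * 12 := by
    rw [Finset.mul_sum]
    calc (∑ a ∈ H, 4 * (G.neighborFinset a ∩ H).card)
        ≤ ∑ a ∈ H, (((G.neighborFinset a ∩ H).card.choose 3) + 12) :=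
          Finset.sum_le_sum fun a _ => choose3_ge _
      _ = _ := by rw [Finset.sum_add_distrib, Finset.sum_const, smul_eq_mul]
  -- name all the sums and finish arithmetically
  set SH := ∑ a ∈ H, G.degree a with hSH
  set SL := ∑ v ∈ Hᶜ, G.degree v with hSLd
  set S3 := ∑ a ∈ H, (G.neighborFinset a ∩ H).card with hS3
  set S2 := ∑ v ∈ Hᶜ, (G.neighborFinset v ∩ H).card with hS2
  set I2 := ∑ a ∈ H, ((G.neighborFinset a ∩ H).card.choose 3) with hI2
  set I1 := ∑ v ∈ Hᶜ, ((G.neighborFinset v ∩ H).card.choose 3) with hI1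
  have hk11 : H.card ≤ 11 := by
    by_contra hk
    push_neg at hk
    have h12 : 12 * n ≤ H.card * n := Nat.mul_le_mul_right n hk
    omega
  clear hT3 hIdent hcon
  generalize hk : H.card = k at *
  interval_cases k <;>
    first
      | omega
      | (norm_num [Nat.choose] at hF8; omega)
end

section
/- Let G be a planar graph containing a vertex v of degree 4 with neighbourhood {v1,v2,v3,v4}, where v1v2v3v4 forms a cycle. Then the number of edges of G with one endpoint in {v1,v2,v3,v4} and the other endpoint outside {v,v1,v2,v3,v4} is at most 2n−6, where n is the number of vertices of G. -/
attribute [local instance] Classical.propDecidable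

open SimpleGraph

lemma k33_aux {V : Type} (G : SimpleGraph V) (hP : G.Planar) (x y : Fin 3 → V)
    (hx : Function.Injective x) (hy : Function.Injective y)
    (hxy : ∀ i j, x i ≠ y j) (hadj : ∀ i j, G.Adj (x i) (y j)) : False := by
  refine hP.2 ⟨Fin 3 ⊕ Fin 3, completeBipartiteGraph (Fin 3) (Fin 3), Subdivision.base,
    ⟨Sum.elim x y, ?_⟩, ?_⟩
  · intro a b hab
    rcases a with a | a <;> rcases b with b | b <;> simp at hab
    · exact congrArg _ (hx hab)
    · exact absurd hab (hxy a b)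
    · exact absurd hab.symm (hxy b a)
    · exact congrArg _ (hy hab)
  · intro a b hab
    rcases a with a | a <;> rcases b with b | b <;>
      simp only [completeBipartiteGraph] at hab <;> simp_all
    · exact hadj a b
    · exact (hadj b a).symm

/-- If a planar graph `G` on `n` vertices has a vertex `v` of degree `4` whose neighbourhood
`{v₁, v₂, v₃, v₄}` spans a cycle, then at most `2n - 6` edges of `G` join a vertex of
`{v₁, v₂, v₃, v₄}` to a vertex outside `{v, v₁, v₂, v₃, v₄}`. -/
theorem stmt5 {V : Type} [Fintype V] (G : SimpleGraph V) (hP : G.Planar)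
    (v v1 v2 v3 v4 : V)
    (hnb : (G.neighborFinset v : Set V) = {v1, v2, v3, v4})
    (h12 : v1 ≠ v2) (h13 : v1 ≠ v3) (h14 : v1 ≠ v4) (h23 : v2 ≠ v3) (h24 : v2 ≠ v4)
    (h34 : v3 ≠ v4)
    (hc1 : G.Adj v1 v2) (hc2 : G.Adj v2 v3) (hc3 : G.Adj v3 v4) (hc4 : G.Adj v4 v1) :
    (G.edgeFinset.filter fun e => ∃ a b : V, e = s(a, b) ∧
        a ∈ ({v1, v2, v3, v4} : Set V) ∧ b ∉ ({v, v1, v2, v3, v4} : Set V)).card ≤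
      2 * Fintype.card V - 6 := by
  classical
  have hAdj : ∀ x, G.Adj v x ↔ (x = v1 ∨ x = v2 ∨ x = v3 ∨ x = v4) := fun x => by
    simpa using Set.ext_iff.1 hnb x
  have hv1 : G.Adj v v1 := (hAdj v1).2 (Or.inl rfl)
  have hv2 : G.Adj v v2 := (hAdj v2).2 (Or.inr (Or.inl rfl))
  have hv3 : G.Adj v v3 := (hAdj v3).2 (Or.inr (Or.inr (Or.inl rfl)))
  have hv4 : G.Adj v v4 := (hAdj v4).2 (Or.inr (Or.inr (Or.inr rfl)))
  set S : Finset V := {v1, v2, v3, v4} with hSdef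
  have hmemS : ∀ x, x ∈ S ↔ (x = v1 ∨ x = v2 ∨ x = v3 ∨ x = v4) := by
    intro x; simp [hSdef]
  have hvS : v ∉ S := by
    rw [hmemS]
    rintro (rfl | rfl | rfl | rfl)
    exacts [G.ne_of_adj hv1 rfl, G.ne_of_adj hv2 rfl, G.ne_of_adj hv3 rfl, G.ne_of_adj hv4 rfl]
  have hScard : S.card = 4 := by
    rw [hSdef]
    rw [Finset.card_insert_of_notMem (by simp [h12, h13, h14]),
        Finset.card_insert_of_notMem (by simp [h23, h24]),
        Finset.card_insert_of_notMem (by simp [h34]), Finset.card_singleton]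
  set K : Finset V := insert v S with hKdef
  have hKcard : K.card = 5 := by
    rw [hKdef, Finset.card_insert_of_notMem hvS, hScard]
  set T : Finset V := Finset.univ \ K with hTdef
  have hmemT : ∀ b, b ∈ T ↔ (b ≠ v ∧ b ∉ S) := by
    intro b; simp [hTdef, hKdef, not_or]
  set N : V → Finset V := fun b => S.filter (fun a => G.Adj a b) with hNdef
  have hNsub : ∀ b, N b ⊆ S := fun b => Finset.filter_subset _ _
  -- pairwise disjointness of the triple families
  have hdisj : ∀ b ∈ T, ∀ b' ∈ T, b ≠ b' →
      Disjoint ((N b).powersetCard 3) ((N b').powersetCard 3) := by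
    intro b hb b' hb' hne
    rw [Finset.disjoint_left]
    intro A hA hA'
    rw [Finset.mem_powersetCard] at hA hA'
    obtain ⟨hA1, hA3⟩ := hA
    obtain ⟨hA'1, -⟩ := hA'
    obtain ⟨a1, a2, a3, ha12, ha13, ha23, rfl⟩ := Finset.card_eq_three.1 hA3
    have m1 : a1 ∈ N b := hA1 (by simp)
    have m2 : a2 ∈ N b := hA1 (by simp)
    have m3 : a3 ∈ N b := hA1 (by simp)
    have m1' : a1 ∈ N b' := hA'1 (by simp)
    have m2' : a2 ∈ N b' := hA'1 (by simp)
    have m3' : a3 ∈ N b' := hA'1 (by simp)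
    rw [hNdef, Finset.mem_filter] at m1 m2 m3 m1' m2' m3'
    obtain ⟨hbv, hbS⟩ := (hmemT b).1 hb
    obtain ⟨hb'v, hb'S⟩ := (hmemT b').1 hb'
    refine k33_aux G hP ![v, b, b'] ![a1, a2, a3] ?_ ?_ ?_ ?_
    · intro i j h
      fin_cases i <;> fin_cases j <;> simp_all <;>
        first
          | rfl
          | exact absurd h.symm hbv
          | exact absurd h hbv
          | exact absurd h.symm hb'v
          | exact absurd h hb'v
          | exact absurd h hne
          | exact absurd h.symm hne
    · intro i j h
      fin_cases i <;> fin_cases j <;> simp_all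
    · intro i j
      fin_cases i <;> fin_cases j <;> simp <;>
        first
          | exact fun h => hvS (h ▸ m1.1)
          | exact fun h => hvS (h ▸ m2.1)
          | exact fun h => hvS (h ▸ m3.1)
          | exact fun h => hbS (h ▸ m1.1)
          | exact fun h => hbS (h ▸ m2.1)
          | exact fun h => hbS (h ▸ m3.1)
          | exact fun h => hb'S (h ▸ m1.1)
          | exact fun h => hb'S (h ▸ m2.1)
          | exact fun h => hb'S (h ▸ m3.1)
    · intro i j
      fin_cases i <;> fin_cases j <;> simp <;>
        first
          | exact (hAdj a1).2 ((hmemS a1).1 m1.1)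
          | exact (hAdj a2).2 ((hmemS a2).1 m2.1)
          | exact (hAdj a3).2 ((hmemS a3).1 m3.1)
          | exact m1.2.symm
          | exact m2.2.symm
          | exact m3.2.symm
          | exact m1'.2.symm
          | exact m2'.2.symm
          | exact m3'.2.symm
  -- the slack estimate
  have hslack : ∑ b ∈ T, ((N b).powersetCard 3).card ≤ 4 := by
    rw [← Finset.card_biUnion hdisj]
    calc (T.biUnion fun b => (N b).powersetCard 3).card
        ≤ (S.powersetCard 3).card := by
          apply Finset.card_le_card
          intro A hA
          rw [Finset.mem_biUnion] at hA
          obtain ⟨b, -, hA⟩ := hA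
          exact Finset.powersetCard_mono (hNsub b) hA
      _ = 4 := by rw [Finset.card_powersetCard, hScard]; rfl
  have hdeg : ∀ b ∈ T, (N b).card ≤ 2 + ((N b).powersetCard 3).card := by
    intro b _
    rw [Finset.card_powersetCard]
    have h4 : (N b).card ≤ 4 := hScard ▸ Finset.card_le_card (hNsub b)
    interval_cases h : (N b).card <;> decide
  have hsum : ∑ b ∈ T, (N b).card ≤ 2 * T.card + 4 := by
    calc ∑ b ∈ T, (N b).card
        ≤ ∑ b ∈ T, (2 + ((N b).powersetCard 3).card) := Finset.sum_le_sum hdeg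
      _ = 2 * T.card + ∑ b ∈ T, ((N b).powersetCard 3).card := by
          rw [Finset.sum_add_distrib, Finset.sum_const, smul_eq_mul, mul_comm]
      _ ≤ 2 * T.card + 4 := by omega
  -- the edge count is at most this sum
  have hF : (G.edgeFinset.filter fun e => ∃ a b : V, e = s(a, b) ∧
        a ∈ ({v1, v2, v3, v4} : Set V) ∧ b ∉ ({v, v1, v2, v3, v4} : Set V)).card ≤
      ∑ b ∈ T, (N b).card := by
    calc (G.edgeFinset.filter fun e => ∃ a b : V, e = s(a, b) ∧
        a ∈ ({v1, v2, v3, v4} : Set V) ∧ b ∉ ({v, v1, v2, v3, v4} : Set V)).card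
        ≤ (T.biUnion fun b => (N b).image fun a => s(a, b)).card := by
          apply Finset.card_le_card
          intro e he
          rw [Finset.mem_filter] at he
          obtain ⟨heE, a, b, rfl, haS, hbK⟩ := he
          have hab : G.Adj a b := by
            rw [SimpleGraph.mem_edgeFinset, SimpleGraph.mem_edgeSet] at heE
            exact heE
          have haS' : a ∈ S := by
            rw [hmemS]; simpa using haS
          have hbT : b ∈ T := by
            rw [hmemT]
            constructor
            · intro h; exact hbK (by simp [h])
            · rw [hmemS]; intro h
              apply hbK
              rcases h with h | h | h | h <;> simp [h]
          have haN : a ∈ N b := by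
            rw [hNdef, Finset.mem_filter]
            exact ⟨haS', hab⟩
          rw [Finset.mem_biUnion]
          exact ⟨b, hbT, Finset.mem_image.2 ⟨a, haN, rfl⟩⟩
      _ ≤ ∑ b ∈ T, ((N b).image fun a => s(a, b)).card := Finset.card_biUnion_le
      _ ≤ ∑ b ∈ T, (N b).card := Finset.sum_le_sum fun b _ => Finset.card_image_le
  have hTcard : T.card = Fintype.card V - 5 := by
    rw [hTdef, Finset.card_sdiff_of_subset (Finset.subset_univ K), hKcard, Finset.card_univ]
  have hn5 : 5 ≤ Fintype.card V := by
    rw [← hKcard, ← Finset.card_univ]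
    exact Finset.card_le_card (Finset.subset_univ K)
  omega
end

section
/- Let G be a planar graph containing a vertex v of degree 6 whose six neighbours form a cycle. Then the number of edges of G joining a neighbour of v to a vertex outside the closed neighbourhood of v is at most 2n+6, where n = |V(G)|. -/
attribute [local instance] Classical.propDecidable

open SimpleGraph

lemma vec3_inj {α : Type*} {a b c : α} (hab : a ≠ b) (hac : a ≠ c) (hbc : b ≠ c) :
    Function.Injective ![a, b, c] := by
  intro i j h
  fin_cases i <;> fin_cases j <;> simp_all

lemma vec3_forall {α : Type*} {P : α → Prop} {a b c : α} (ha : P a) (hb : P b) (hc : P c) :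
    ∀ i, P (![a, b, c] i) := by
  intro i; fin_cases i <;> simpa

lemma k33_sub {V : Type} {G : SimpleGraph V} (g h : Fin 3 → V)
    (hg : Function.Injective g) (hh : Function.Injective h)
    (hgh : ∀ i j, g i ≠ h j) (adj : ∀ i j, G.Adj (g i) (h j)) :
    ContainsSubdivision G (completeBipartiteGraph (Fin 3) (Fin 3)) := by
  refine ⟨Fin 3 ⊕ Fin 3, completeBipartiteGraph (Fin 3) (Fin 3), Subdivision.base,
    ⟨Sum.elim g h, ?_⟩, ?_⟩
  · intro p q hpq
    cases p <;> cases q <;> simp only [Sum.elim_inl, Sum.elim_inr] at hpq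
    · exact congrArg _ (hg hpq)
    · exact absurd hpq (hgh _ _)
    · exact absurd hpq.symm (hgh _ _)
    · exact congrArg _ (hh hpq)
  · rintro (a|a) (b|b) hab <;>
      simp only [completeBipartiteGraph_adj, Sum.isLeft_inl, Sum.isRight_inl,
        Sum.isLeft_inr, Sum.isRight_inr, and_false, false_and, and_true, true_and,
        or_false, false_or, Function.Embedding.coeFn_mk, Sum.elim_inl, Sum.elim_inr] at hab ⊢ <;>
    first | exact adj _ _ | exact (adj _ _).symm | simp_all

/-- If a planar graph `G` on `n` vertices has a vertex `v` of degree `6` whose neighbours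
form a cycle, then at most `2n + 6` edges of `G` join a neighbour of `v` to a vertex
outside the closed neighbourhood of `v`. -/
theorem stmt7 {V : Type} [Fintype V] (G : SimpleGraph V) (hP : G.Planar)
    (v : V) (hdeg : G.degree v = 6)
    (c : Fin 6 → V) (hc_inj : Function.Injective c) (hc_nb : ∀ i, G.Adj v (c i))
    (hc_all : ∀ w : V, G.Adj v w → ∃ i, c i = w)
    (hc_cyc : ∀ i : Fin 6, G.Adj (c i) (c (i + 1))) :
    (G.edgeFinset.filter fun e => ∃ a b : V, e = s(a, b) ∧
        a ∈ G.neighborFinset v ∧ b ≠ v ∧ b ∉ G.neighborFinset v).card ≤ 2 * Fintype.card V + 6 := by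
  classical
  set N : Finset V := G.neighborFinset v with hN
  have hNcard : N.card = 6 := hdeg
  have hvN : v ∉ N := by simp [hN]
  set O : Finset V := Finset.univ.filter (fun w => w ≠ v ∧ w ∉ N) with hO
  set d : V → ℕ := fun w => ((G.neighborFinset w) ∩ N).card with hd
  set t : V → Finset (Finset V) := fun w => ((G.neighborFinset w) ∩ N).powersetCard 3 with ht
  -- step 1 : the count equals ∑ d
  have key : (G.edgeFinset.filter fun e => ∃ a b : V, e = s(a, b) ∧
        a ∈ G.neighborFinset v ∧ b ≠ v ∧ b ∉ G.neighborFinset v).card = ∑ w ∈ O, d w := by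
    rw [← Finset.card_sigma]
    apply (Finset.card_bij (fun (p : (_ : V) × V) _ => s(p.1, p.2)) ?_ ?_ ?_).symm
    · rintro ⟨w, a⟩ hp
      rw [Finset.mem_sigma] at hp
      obtain ⟨hw, ha⟩ := hp
      rw [hO, Finset.mem_filter] at hw
      rw [Finset.mem_inter] at ha
      rw [Finset.mem_filter]
      refine ⟨?_, a, w, ?_, ha.2, hw.2.1, hw.2.2⟩
      · rw [mem_edgeFinset, mem_edgeSet]
        exact (G.mem_neighborFinset w a).mp ha.1
      · exact Sym2.eq_swap
    · rintro ⟨w, a⟩ hp ⟨w', a'⟩ hp' heq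
      rw [Finset.mem_sigma] at hp hp'
      obtain ⟨hw, ha⟩ := hp
      obtain ⟨hw', ha'⟩ := hp'
      rw [hO, Finset.mem_filter] at hw hw'
      rw [Finset.mem_inter] at ha ha'
      change s((w, a).1, (w, a).2) = s((w', a').1, (w', a').2) at heq
      rw [Sym2.mk_eq_mk_iff] at heq
      rcases heq with h | h
      · simp only [Prod.mk.injEq] at h
        simp [h.1, h.2]
      · simp only [Prod.swap_prod_mk, Prod.mk.injEq] at h
        exact absurd (h.1 ▸ ha'.2) hw.2.2
    · intro e he
      rw [Finset.mem_filter] at he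
      obtain ⟨hedge, a, b, rfl, haN, hbv, hbN⟩ := he
      have hadj : G.Adj a b := by rwa [mem_edgeFinset, mem_edgeSet] at hedge
      refine ⟨⟨b, a⟩, ?_, Sym2.eq_swap⟩
      rw [Finset.mem_sigma]
      refine ⟨?_, ?_⟩
      · rw [hO, Finset.mem_filter]
        exact ⟨Finset.mem_univ _, hbv, hbN⟩
      · rw [Finset.mem_inter]
        exact ⟨(G.mem_neighborFinset b a).mpr hadj.symm, haN⟩
  rw [key]
  -- step 2 : d w ≤ 2 + (t w).card
  have hdt : ∀ w, d w ≤ 2 + (t w).card := by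
    intro w
    have h6 : d w ≤ 6 := hNcard ▸ Finset.card_le_card Finset.inter_subset_right
    rw [ht]
    simp only [Finset.card_powersetCard]
    have : ∀ m : ℕ, m ≤ 6 → m ≤ 2 + Nat.choose m 3 := by decide
    exact this _ h6
  -- step 3 : the t w are pairwise disjoint over O
  have hdisj : ∀ w1 ∈ O, ∀ w2 ∈ O, w1 ≠ w2 → Disjoint (t w1) (t w2) := by
    intro w1 hw1 w2 hw2 hne
    rw [Finset.disjoint_left]
    intro s hs1 hs2
    rw [ht, Finset.mem_powersetCard] at hs1 hs2
    obtain ⟨hsub1, hcard⟩ := hs1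
    obtain ⟨hsub2, -⟩ := hs2
    rw [hO, Finset.mem_filter] at hw1 hw2
    obtain ⟨a, b, e, hab, hae, hbe, rfl⟩ := Finset.card_eq_three.mp hcard
    have hmem : ∀ x ∈ ({a, b, e} : Finset V), x ∈ N ∧ G.Adj x v ∧ G.Adj x w1 ∧ G.Adj x w2 := by
      intro x hx
      have h1 := Finset.mem_inter.mp (hsub1 hx)
      have h2 := Finset.mem_inter.mp (hsub2 hx)
      refine ⟨h1.2, ?_, ?_, ?_⟩
      · exact ((G.mem_neighborFinset v x).mp h1.2).symm
      · exact ((G.mem_neighborFinset w1 x).mp h1.1).symm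
      · exact ((G.mem_neighborFinset w2 x).mp h2.1).symm
    have ha' := hmem a (by simp)
    have hb' := hmem b (by simp)
    have he' := hmem e (by simp)
    have hw1v : w1 ≠ v := hw1.2.1
    have hw2v : w2 ≠ v := hw2.2.1
    have hw1N : w1 ∉ N := hw1.2.2
    have hw2N : w2 ∉ N := hw2.2.2
    clear key hdt hmem hsub1 hsub2 hw1 hw2 hc_cyc hc_all hc_nb hcard
    have hg : ∀ i, (![a, b, e] i) ∈ N ∧ G.Adj (![a, b, e] i) v ∧
        G.Adj (![a, b, e] i) w1 ∧ G.Adj (![a, b, e] i) w2 :=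
      vec3_forall (P := fun x => x ∈ N ∧ G.Adj x v ∧ G.Adj x w1 ∧ G.Adj x w2) ha' hb' he'
    have hh : ∀ j, (![v, w1, w2] j) ∉ N := vec3_forall (P := fun x => x ∉ N) hvN hw1N hw2N
    have hadj : ∀ j, ∀ x, G.Adj x v ∧ G.Adj x w1 ∧ G.Adj x w2 → G.Adj x (![v, w1, w2] j) := by
      intro j
      refine vec3_forall (a := v) (b := w1) (c := w2)
        (P := fun y => ∀ x, G.Adj x v ∧ G.Adj x w1 ∧ G.Adj x w2 → G.Adj x y) ?_ ?_ ?_ j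
      · exact fun x hx => hx.1
      · exact fun x hx => hx.2.1
      · exact fun x hx => hx.2.2
    refine hP.2 (k33_sub ![a, b, e] ![v, w1, w2] (vec3_inj hab hae hbe)
      (vec3_inj hw1v.symm hw2v.symm hne) ?_ ?_)
    · intro i j h
      exact hh j (h ▸ (hg i).1)
    · intro i j
      exact hadj j _ (hg i).2
  -- step 4 : ∑ (t w).card ≤ C(6,3) = 20
  have hsum : ∑ w ∈ O, (t w).card ≤ 20 := by
    rw [← Finset.card_biUnion hdisj]
    have hsub : O.biUnion t ⊆ N.powersetCard 3 := by
      intro s hs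
      rw [Finset.mem_biUnion] at hs
      obtain ⟨w, -, hs⟩ := hs
      rw [ht, Finset.mem_powersetCard] at hs
      rw [Finset.mem_powersetCard]
      exact ⟨hs.1.trans Finset.inter_subset_right, hs.2⟩
    calc (O.biUnion t).card ≤ (N.powersetCard 3).card := Finset.card_le_card hsub
      _ = 20 := by rw [Finset.card_powersetCard, hNcard]; decide
  -- step 5 : |O| + 7 ≤ n
  have hOcard : O.card + 7 ≤ Fintype.card V := by
    have hdisj2 : Disjoint O (insert v N) := by
      rw [Finset.disjoint_left]
      intro w hw hw'
      rw [hO, Finset.mem_filter] at hw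
      rw [Finset.mem_insert] at hw'
      rcases hw' with rfl | h
      · exact hw.2.1 rfl
      · exact hw.2.2 h
    have h7 : (insert v N).card = 7 := by
      rw [Finset.card_insert_of_notMem hvN, hNcard]
    calc O.card + 7 = (O ∪ insert v N).card := by
          rw [Finset.card_union_of_disjoint hdisj2, h7]
      _ ≤ Fintype.card V := by
          rw [← Finset.card_univ]; exact Finset.card_le_card (Finset.subset_univ _)
  -- combine
  calc ∑ w ∈ O, d w ≤ ∑ w ∈ O, (2 + (t w).card) := Finset.sum_le_sum (fun w _ => hdt w)
    _ = 2 * O.card + ∑ w ∈ O, (t w).card := by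
        rw [Finset.sum_add_distrib, Finset.sum_const, smul_eq_mul, mul_comm]
    _ ≤ 2 * Fintype.card V + 6 := by omega
end
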